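/- arXiv:1511.03025 — 13 statements merged into one kernel-verified Lean document; each statement's English description precedes it below -/
import Mathlib

section
/- Let R be a commutative ring and A a commutative R-algebra. Let X, v₁, v₂, v₃ be derivations of A satisfying the commutation relations ⁅v₁,v₃⁆ = v₁, ⁅v₁,v₂⁆ = 2 • v₃, ⁅v₃,v₂⁆ = v₂, and suppose there exist ρ₁, ρ₂ ∈ A with ⁅v₁,X⁆ = ρ₁ • X and ⁅v₂,X⁆ = ρ₂ • X. Let F₁, F₂ ∈ A satisfy v₃ F₁ = F₁, X F₁ = 0, v₂ F₁ = 0 and v₃ F₂ = −F₂, X F₂ = 0, v₁ F₂ = 0. Then the following five bracket relations hold: ⁅F₁ • v₁, X⁆ = (F₁ * ρ₁) • X, ⁅F₂ • v₂, X⁆ = (F₂ * ρ₂) • X, ⁅v₃, F₁ • v₁⁆ = 0, ⁅v₃, F₂ • v₂⁆ = 0, and ⁅F₁ • v₁, F₂ • v₂⁆ = (2 * F₁ * F₂) • v₃. (These are the relations showing that ⟨X, v₃, F₁v₁, F₂v₂⟩ and ⟨X, v₃, F₂v₂, F₁v₁⟩ are solvable structures; Theorem 4.3 of the paper.) -/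
private lemma smul_lie_deriv {R A : Type*} [CommRing R] [CommRing A] [Algebra R A]
    (f : A) (D E : Derivation R A A) :
    ⁅f • D, E⁆ = f • ⁅D, E⁆ - (E f) • D := by
  ext a
  simp only [Derivation.commutator_apply, Derivation.coe_smul, Pi.smul_apply,
    Derivation.sub_apply, Derivation.smul_apply, Derivation.leibniz, smul_eq_mul]
  ring

private lemma lie_smul_deriv {R A : Type*} [CommRing R] [CommRing A] [Algebra R A]
    (f : A) (D E : Derivation R A A) :
    ⁅D, f • E⁆ = f • ⁅D, E⁆ + (D f) • E := by
  ext a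
  simp only [Derivation.commutator_apply, Derivation.coe_smul, Pi.smul_apply,
    Derivation.add_apply, Derivation.smul_apply, Derivation.leibniz, smul_eq_mul]
  ring

/-- Theorem 4.3: the rescaled symmetries form solvable structures. -/
theorem solvable_structure_brackets
    {R A : Type*} [CommRing R] [CommRing A] [Algebra R A]
    (X v₁ v₂ v₃ : Derivation R A A) (ρ₁ ρ₂ F₁ F₂ : A)
    (h13 : ⁅v₁, v₃⁆ = v₁)
    (h12 : ⁅v₁, v₂⁆ = 2 • v₃)
    (h32 : ⁅v₃, v₂⁆ = v₂)
    (h1X : ⁅v₁, X⁆ = ρ₁ • X)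
    (h2X : ⁅v₂, X⁆ = ρ₂ • X)
    (hF1v3 : v₃ F₁ = F₁) (hF1X : X F₁ = 0) (hF1v2 : v₂ F₁ = 0)
    (hF2v3 : v₃ F₂ = -F₂) (hF2X : X F₂ = 0) (hF2v1 : v₁ F₂ = 0) :
    ⁅F₁ • v₁, X⁆ = (F₁ * ρ₁) • X ∧
    ⁅F₂ • v₂, X⁆ = (F₂ * ρ₂) • X ∧
    ⁅v₃, F₁ • v₁⁆ = 0 ∧
    ⁅v₃, F₂ • v₂⁆ = 0 ∧
    ⁅F₁ • v₁, F₂ • v₂⁆ = (2 * F₁ * F₂) • v₃ := by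
  have h31 : ⁅v₃, v₁⁆ = -v₁ := by rw [← lie_skew, h13]
  refine ⟨?_, ?_, ?_, ?_, ?_⟩
  · rw [smul_lie_deriv, h1X, hF1X, zero_smul, sub_zero, smul_smul]
  · rw [smul_lie_deriv, h2X, hF2X, zero_smul, sub_zero, smul_smul]
  · rw [lie_smul_deriv, h31, hF1v3, smul_neg, neg_add_cancel]
  · rw [lie_smul_deriv, h32, hF2v3, neg_smul, add_neg_cancel]
  · rw [smul_lie_deriv, lie_smul_deriv, h12, hF2v1, zero_smul, add_zero,
      Derivation.smul_apply, hF1v2, smul_eq_mul, mul_zero, zero_smul, sub_zero,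
      smul_smul]
    ext a
    simp only [Derivation.smul_apply, Derivation.coe_smul, Pi.smul_apply, smul_eq_mul,
      nsmul_eq_mul, Nat.cast_ofNat]
    ring
end

section
/- Let R be a commutative ring and A a commutative R-algebra. Let X, v₁, v₂, v₃ be derivations of A with ⁅v₁,v₃⁆ = v₁ and ⁅v₁,v₂⁆ = 2 • v₃, and suppose there exists ρ₁ ∈ A with ⁅v₁,X⁆ = ρ₁ • X. Let I₂ ∈ A satisfy X I₂ = 0, v₂ I₂ = 0, v₃ I₂ = 0, and let F₁ ∈ A satisfy F₁ * (v₁ I₂) = 1 (i.e., F₁ is a multiplicative inverse of v₁ I₂). Then v₃ F₁ = F₁, X F₁ = 0, and v₂ F₁ = 0. (Lemma 4.2 of the paper, the part concerning F₁ = 1/(v₁⁽²⁾(I₂)).) -/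
/-- Lemma 4.2, the part concerning `F₁ = 1/(v₁⁽²⁾(I₂))`. -/
theorem F1_satisfies_system
    {R A : Type*} [CommRing R] [CommRing A] [Algebra R A]
    (X v₁ v₂ v₃ : Derivation R A A) (ρ₁ I₂ F₁ : A)
    (h13 : ⁅v₁, v₃⁆ = v₁)
    (h12 : ⁅v₁, v₂⁆ = 2 • v₃)
    (h1X : ⁅v₁, X⁆ = ρ₁ • X)
    (hXI : X I₂ = 0) (h2I : v₂ I₂ = 0) (h3I : v₃ I₂ = 0)
    (hF : F₁ * v₁ I₂ = 1) :
    v₃ F₁ = F₁ ∧ X F₁ = 0 ∧ v₂ F₁ = 0 := by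
  have h3u : v₃ (v₁ I₂) = -(v₁ I₂) := by
    have := congrArg (fun D : Derivation R A A => D I₂) h13
    simp only [Derivation.commutator_apply, h3I, map_zero] at this
    linear_combination -this
  have hXu : X (v₁ I₂) = 0 := by
    have := congrArg (fun D : Derivation R A A => D I₂) h1X
    simp only [Derivation.commutator_apply, hXI, map_zero, Derivation.smul_apply,
      smul_eq_mul, mul_zero] at this
    linear_combination -this
  have h2u : v₂ (v₁ I₂) = 0 := by
    have := congrArg (fun D : Derivation R A A => D I₂) h12
    simp only [Derivation.commutator_apply, h2I, map_zero, Derivation.smul_apply,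
      smul_eq_mul] at this
    rw [h3I, smul_zero] at this
    linear_combination -this
  refine ⟨?_, ?_, ?_⟩
  · have key : v₃ (F₁ * v₁ I₂) = 0 := by rw [hF]; simp
    rw [Derivation.leibniz, smul_eq_mul, smul_eq_mul, h3u] at key
    have : v₃ F₁ * (v₁ I₂ * F₁) = F₁ * (v₁ I₂ * F₁) := by linear_combination F₁ * key
    rwa [mul_comm (v₁ I₂) F₁, hF, mul_one, mul_one] at this
  · have key : X (F₁ * v₁ I₂) = 0 := by rw [hF]; simp
    rw [Derivation.leibniz, smul_eq_mul, smul_eq_mul, hXu, mul_zero, zero_add] at key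
    have : X F₁ * (v₁ I₂ * F₁) = 0 := by linear_combination F₁ * key
    rwa [mul_comm (v₁ I₂) F₁, hF, mul_one] at this
  · have key : v₂ (F₁ * v₁ I₂) = 0 := by rw [hF]; simp
    rw [Derivation.leibniz, smul_eq_mul, smul_eq_mul, h2u, mul_zero, zero_add] at key
    have : v₂ F₁ * (v₁ I₂ * F₁) = 0 := by linear_combination F₁ * key
    rwa [mul_comm (v₁ I₂) F₁, hF, mul_one] at this
end

section
/- Let R be a commutative ring and A a commutative R-algebra. Let X, v₁, v₂, v₃ be derivations of A with ⁅v₃,v₂⁆ = v₂ and ⁅v₁,v₂⁆ = 2 • v₃, and suppose there exists ρ₂ ∈ A with ⁅v₂,X⁆ = ρ₂ • X. Let I₁ ∈ A satisfy X I₁ = 0, v₁ I₁ = 0, v₃ I₁ = 0, and let F₂ ∈ A satisfy F₂ * (v₂ I₁) = 1. Then v₃ F₂ = −F₂, X F₂ = 0, and v₁ F₂ = 0. (Lemma 4.2 of the paper, the part concerning F₂ = 1/(v₂⁽²⁾(I₁)).) -/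
lemma deriv_inv_aux {R A : Type*} [CommRing R] [CommRing A] [Algebra R A]
    (D : Derivation R A A) {u F : A} (hF : F * u = 1) :
    D F = -(F * F * D u) := by
  have h0 : D (F * u) = 0 := by rw [hF]; simp
  rw [D.leibniz] at h0
  have : D F = D F * (F * u) := by rw [hF, mul_one]
  calc D F = D F * (F * u) := this
    _ = F * (F • D u + u • D F) * 1 + -(F * F * D u) := by simp [smul_eq_mul]; ring
    _ = -(F * F * D u) := by rw [h0]; ring

/-- Lemma 4.2, the part concerning `F₂ = 1/(v₂⁽²⁾(I₁))`. -/
theorem F2_satisfies_system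
    {R A : Type*} [CommRing R] [CommRing A] [Algebra R A]
    (X v₁ v₂ v₃ : Derivation R A A) (ρ₂ I₁ F₂ : A)
    (h32 : ⁅v₃, v₂⁆ = v₂)
    (h12 : ⁅v₁, v₂⁆ = 2 • v₃)
    (h2X : ⁅v₂, X⁆ = ρ₂ • X)
    (hXI : X I₁ = 0) (h1I : v₁ I₁ = 0) (h3I : v₃ I₁ = 0)
    (hF : F₂ * v₂ I₁ = 1) :
    v₃ F₂ = -F₂ ∧ X F₂ = 0 ∧ v₁ F₂ = 0 := by
  have hu3 : v₃ (v₂ I₁) = v₂ I₁ := by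
    have := congrArg (fun D : Derivation R A A => D I₁) h32
    simp [Derivation.commutator_apply, h3I] at this
    simpa using this
  have huX : X (v₂ I₁) = 0 := by
    have := congrArg (fun D : Derivation R A A => D I₁) h2X
    simp [Derivation.commutator_apply, hXI] at this
    exact this
  have hu1 : v₁ (v₂ I₁) = 0 := by
    have := congrArg (fun D : Derivation R A A => D I₁) h12
    simp [Derivation.commutator_apply, h1I, h3I] at this
    simpa using this
  refine ⟨?_, ?_, ?_⟩
  · rw [deriv_inv_aux v₃ hF, hu3]
    calc -(F₂ * F₂ * v₂ I₁) = -(F₂ * (F₂ * v₂ I₁)) := by ring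
      _ = -F₂ := by rw [hF, mul_one]
  · rw [deriv_inv_aux X hF, huX]; ring
  · rw [deriv_inv_aux v₁ hF, hu1]; ring
end

section
/- Let R be a commutative ring and A a commutative R-algebra. Let D, X₁, X₂ be derivations of A and λ₁, λ₂, ρ, h₁, h₂ ∈ A such that ⁅X₁,D⁆ = λ₁ • X₁, ⁅X₂,D⁆ = λ₂ • X₂, ⁅X₁,X₂⁆ = ρ • X₁ − ρ • X₂, and D h₁ = λ₁ * h₁, X₂ h₁ = ρ * h₁, D h₂ = λ₂ * h₂, X₁ h₂ = ρ * h₂. Then ⁅h₁ • X₁, D⁆ = 0, ⁅h₂ • X₂, D⁆ = 0, and ⁅h₁ • X₁, h₂ • X₂⁆ = 0; that is, {D, h₁X₁, h₂X₂} is an abelian Lie algebra. (The claim following systems (3.7) in the paper: solutions h̄₁, h̄₂ of systems (3.7) turn {A, h̄₁X₁, h̄₂X₂} into an abelian algebra.) -/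
/-- Solutions of systems (3.7) turn `{A, h̄₁X₁, h̄₂X₂}` into an abelian algebra. -/
theorem abelian_algebra_from_h
    {R A : Type*} [CommRing R] [CommRing A] [Algebra R A]
    (D X₁ X₂ : Derivation R A A) (lam₁ lam₂ ρ h₁ h₂ : A)
    (h1D : ⁅X₁, D⁆ = lam₁ • X₁)
    (h2D : ⁅X₂, D⁆ = lam₂ • X₂)
    (h12 : ⁅X₁, X₂⁆ = ρ • X₁ - ρ • X₂)
    (hDh1 : D h₁ = lam₁ * h₁) (hX2h1 : X₂ h₁ = ρ * h₁)
    (hDh2 : D h₂ = lam₂ * h₂) (hX1h2 : X₁ h₂ = ρ * h₂) :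
    ⁅h₁ • X₁, D⁆ = 0 ∧ ⁅h₂ • X₂, D⁆ = 0 ∧ ⁅h₁ • X₁, h₂ • X₂⁆ = 0 := by
  refine ⟨?_, ?_, ?_⟩ <;> ext a
  · have h := congrArg (fun E : Derivation R A A => E a) h1D
    simp only [Derivation.commutator_apply, Derivation.smul_apply, smul_eq_mul] at h ⊢
    simp only [Derivation.leibniz, map_mul, smul_eq_mul, Derivation.zero_apply, hDh1]
    linear_combination h₁ * h
  · have h := congrArg (fun E : Derivation R A A => E a) h2D
    simp only [Derivation.commutator_apply, Derivation.smul_apply, smul_eq_mul] at h ⊢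
    simp only [Derivation.leibniz, map_mul, smul_eq_mul, Derivation.zero_apply, hDh2]
    linear_combination h₂ * h
  · have h := congrArg (fun E : Derivation R A A => E a) h12
    simp only [Derivation.commutator_apply, Derivation.sub_apply,
      Derivation.smul_apply, smul_eq_mul] at h ⊢
    simp only [Derivation.leibniz, map_mul, smul_eq_mul, Derivation.zero_apply,
      hX1h2, hX2h1]
    linear_combination h₁ * h₂ * h
end

section
/- Let R be a commutative ring and A a commutative R-algebra. Let D, X₁, X₂ be derivations of A and λ₁, ρ ∈ A with ⁅X₁,D⁆ = λ₁ • X₁ and ⁅X₁,X₂⁆ = ρ • X₁ − ρ • X₂. Let I₂ ∈ A satisfy D I₂ = 0 and X₂ I₂ = 0, and let h₁ ∈ A satisfy h₁ * (X₁ I₂) = 1. Then D h₁ = λ₁ * h₁ and X₂ h₁ = ρ * h₁. (Part 2 of Theorem 3.1 of the paper, for h̄₁ = 1/X₁(I₂): a first integral I₂ associated to the second C∞-symmetry yields a solution of the first system in (3.7).) -/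
/-- Theorem 3.1, part 2, for `h̄₁ = 1/X₁(I₂)`. -/
theorem h1_from_first_integral
    {R A : Type*} [CommRing R] [CommRing A] [Algebra R A]
    (D X₁ X₂ : Derivation R A A) (lam₁ ρ I₂ h₁ : A)
    (h1D : ⁅X₁, D⁆ = lam₁ • X₁)
    (h12 : ⁅X₁, X₂⁆ = ρ • X₁ - ρ • X₂)
    (hDI : D I₂ = 0) (hX2I : X₂ I₂ = 0)
    (hh : h₁ * X₁ I₂ = 1) :
    D h₁ = lam₁ * h₁ ∧ X₂ h₁ = ρ * h₁ := by
  have e1 : D (X₁ I₂) = -(lam₁ * X₁ I₂) := by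
    have := congrArg (fun (E : Derivation R A A) => E I₂) h1D
    simp [Derivation.commutator_apply, hDI] at this
    linear_combination -this
  have e2 : X₂ (X₁ I₂) = -(ρ * X₁ I₂) := by
    have := congrArg (fun (E : Derivation R A A) => E I₂) h12
    simp [Derivation.commutator_apply, hX2I] at this
    linear_combination -this
  have d1 := congrArg (D : A → A) hh
  rw [Derivation.leibniz, Derivation.map_one_eq_zero] at d1
  have d2 := congrArg (X₂ : A → A) hh
  rw [Derivation.leibniz, Derivation.map_one_eq_zero] at d2
  constructor
  · have : D h₁ * (h₁ * X₁ I₂) = lam₁ * h₁ * (h₁ * X₁ I₂) := by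
      simp only [smul_eq_mul] at d1
      linear_combination h₁ * d1 - h₁ * h₁ * e1
    rwa [hh, mul_one, mul_one] at this
  · have : X₂ h₁ * (h₁ * X₁ I₂) = ρ * h₁ * (h₁ * X₁ I₂) := by
      simp only [smul_eq_mul] at d2
      linear_combination h₁ * d2 - h₁ * h₁ * e2
    rwa [hh, mul_one, mul_one] at this
end

section
/- Let R be a commutative ring and A a commutative R-algebra. Let D, X₁, X₂ be derivations of A and λ₂, ρ ∈ A with ⁅X₂,D⁆ = λ₂ • X₂ and ⁅X₁,X₂⁆ = ρ • X₁ − ρ • X₂. Let I₁ ∈ A satisfy D I₁ = 0 and X₁ I₁ = 0, and let h₂ ∈ A satisfy h₂ * (X₂ I₁) = 1. Then D h₂ = λ₂ * h₂ and X₁ h₂ = ρ * h₂. (Part 2 of Theorem 3.1 of the paper, for h̄₂ = 1/X₂(I₁): a first integral I₁ associated to the first C∞-symmetry yields a solution of the second system in (3.7).) -/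
/-- Theorem 3.1, part 2, for `h̄₂ = 1/X₂(I₁)`. -/
theorem h2_from_first_integral
    {R A : Type*} [CommRing R] [CommRing A] [Algebra R A]
    (D X₁ X₂ : Derivation R A A) (lam₂ ρ I₁ h₂ : A)
    (h2D : ⁅X₂, D⁆ = lam₂ • X₂)
    (h12 : ⁅X₁, X₂⁆ = ρ • X₁ - ρ • X₂)
    (hDI : D I₁ = 0) (hX1I : X₁ I₁ = 0)
    (hh : h₂ * X₂ I₁ = 1) :
    D h₂ = lam₂ * h₂ ∧ X₁ h₂ = ρ * h₂ := by
  have e1 : D (X₂ I₁) = -(lam₂ * X₂ I₁) := by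
    have := congrArg (fun f : Derivation R A A => f I₁) h2D
    simp [Derivation.commutator_apply, hDI] at this
    linear_combination -this
  have e2 : X₁ (X₂ I₁) = -(ρ * X₂ I₁) := by
    have := congrArg (fun f : Derivation R A A => f I₁) h12
    simp [Derivation.commutator_apply, hX1I] at this
    linear_combination this
  have d1 : D (h₂ * X₂ I₁) = 0 := by rw [hh]; simp
  have d2 : X₁ (h₂ * X₂ I₁) = 0 := by rw [hh]; simp
  rw [Derivation.leibniz] at d1 d2
  simp only [smul_eq_mul, e1, e2] at d1 d2
  constructor
  · have : D h₂ * (h₂ * X₂ I₁) = lam₂ * h₂ * (h₂ * X₂ I₁) := by ring_nf; ring_nf at d1; linear_combination h₂ * d1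
    rwa [hh, mul_one, mul_one] at this
  · have : X₁ h₂ * (h₂ * X₂ I₁) = ρ * h₂ * (h₂ * X₂ I₁) := by ring_nf; ring_nf at d2; linear_combination h₂ * d2
    rwa [hh, mul_one, mul_one] at this
end

section
/- Let I ⊆ ℝ be an open interval and let u : ℝ → ℝ be three times differentiable on I with 2·u′(x)·u‴(x) − 3·u″(x)² − 2·u(x)·u′(x)⁴ = 0 for all x ∈ I. Then for every t ∈ ℝ, the function v(x) := u(x/(1+t·x)) satisfies 2·v′(x)·v‴(x) − 3·v″(x)² − 2·v(x)·v′(x)⁴ = 0 at every x with 1 + t·x ≠ 0 and x/(1+t·x) ∈ I. (The vector field v₂ = x²∂ₓ of (6.2) generates a symmetry group of equation (6.1) of the paper.) -/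
/-!
Write `g y = y / (1 + t y)` and `w y = (1 + t y)⁻¹`, so that `g' = w²` and `w' = -t w²`.
Differentiating `f ∘ g · wⁿ` once more only ever produces terms of the same shape, and three
rounds give, for `v = u ∘ g`,
`v' = u'(g) w²`, `v'' = u''(g) w⁴ - 2t u'(g) w³`, `v''' = u'''(g) w⁶ - 6t u''(g) w⁵ + 6t² u'(g) w⁴`.
The `t`-terms cancel in `2 v' v''' - 3 v''²`, and the left-hand side of the equation for `v` at `x`
is `w(x)⁸` times the one for `u` at `g x`. (Since `2u'u''' - 3u''² = 2u'² S(u)` with `S` the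
Schwarzian derivative, this is the invariance of `S` under the Möbius maps `g`.)
-/

open Set

section ProjectiveFlow

variable {t y : ℝ}

theorem hasDerivAt_one_add_mul (t y : ℝ) : HasDerivAt (fun z => 1 + t * z) t y := by
  simpa using ((hasDerivAt_id y).const_mul t).const_add 1

theorem hasDerivAt_inv_one_add_mul (hy : 1 + t * y ≠ 0) :
    HasDerivAt (fun z => (1 + t * z)⁻¹) (-t * (1 + t * y)⁻¹ ^ 2) y := by
  refine ((hasDerivAt_one_add_mul t y).fun_inv hy).congr_deriv ?_
  rw [inv_pow, div_eq_mul_inv]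

theorem hasDerivAt_div_one_add_mul (hy : 1 + t * y ≠ 0) :
    HasDerivAt (fun z => z / (1 + t * z)) ((1 + t * y)⁻¹ ^ 2) y := by
  refine ((hasDerivAt_id y).fun_div (hasDerivAt_one_add_mul t y) hy).congr_deriv ?_
  simp only [id_eq]
  field_simp
  ring

theorem hasDerivAt_comp_div_one_add_mul_mul_pow {f : ℝ → ℝ} (n : ℕ) (hy : 1 + t * y ≠ 0)
    (hf : DifferentiableAt ℝ f (y / (1 + t * y))) :
    HasDerivAt (fun z => f (z / (1 + t * z)) * (1 + t * z)⁻¹ ^ n)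
      (deriv f (y / (1 + t * y)) * (1 + t * y)⁻¹ ^ (n + 2)
        - n * t * f (y / (1 + t * y)) * (1 + t * y)⁻¹ ^ (n + 1)) y := by
  refine ((hf.hasDerivAt.comp y (hasDerivAt_div_one_add_mul hy)).fun_mul
    ((hasDerivAt_inv_one_add_mul hy).fun_pow n)).congr_deriv ?_
  rcases n with _ | n
  · simp
  · simp only [Function.comp_apply, Nat.cast_add, Nat.cast_one, add_tsub_cancel_right]
    ring

theorem isOpen_setOf_one_add_mul_ne_zero_inter_preimage {U : Set ℝ} (hU : IsOpen U) :
    IsOpen ({y | 1 + t * y ≠ 0} ∩ (fun y => y / (1 + t * y)) ⁻¹' U) := by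
  have hcont : ContinuousOn (fun y => y / (1 + t * y)) {y | 1 + t * y ≠ 0} :=
    fun y hy => (hasDerivAt_div_one_add_mul hy).continuousAt.continuousWithinAt
  exact hcont.isOpen_inter_preimage (isOpen_ne_fun (by fun_prop) continuous_const) hU

end ProjectiveFlow

section Reparametrization

variable {U : Set ℝ} {u : ℝ → ℝ} {t : ℝ}

theorem eqOn_deriv_comp_div_one_add_mul (hu1 : ∀ x ∈ U, DifferentiableAt ℝ u x) :
    EqOn (deriv fun y => u (y / (1 + t * y)))
      (fun y => deriv u (y / (1 + t * y)) * (1 + t * y)⁻¹ ^ 2)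
      ({y | 1 + t * y ≠ 0} ∩ (fun y => y / (1 + t * y)) ⁻¹' U) := by
  intro y ⟨hy, hyU⟩
  simpa using (hasDerivAt_comp_div_one_add_mul_mul_pow 0 hy (hu1 _ hyU)).deriv

theorem eqOn_deriv_deriv_comp_div_one_add_mul (hU : IsOpen U)
    (hu1 : ∀ x ∈ U, DifferentiableAt ℝ u x)
    (hu2 : ∀ x ∈ U, DifferentiableAt ℝ (deriv u) x) :
    EqOn (deriv (deriv fun y => u (y / (1 + t * y))))
      (fun y => deriv (deriv u) (y / (1 + t * y)) * (1 + t * y)⁻¹ ^ 4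
        - 2 * t * deriv u (y / (1 + t * y)) * (1 + t * y)⁻¹ ^ 3)
      ({y | 1 + t * y ≠ 0} ∩ (fun y => y / (1 + t * y)) ⁻¹' U) := by
  intro y hyS
  rw [(eqOn_deriv_comp_div_one_add_mul hu1).deriv
    (isOpen_setOf_one_add_mul_ne_zero_inter_preimage hU) hyS]
  simpa using (hasDerivAt_comp_div_one_add_mul_mul_pow 2 hyS.1 (hu2 _ hyS.2)).deriv

theorem eqOn_deriv_deriv_deriv_comp_div_one_add_mul (hU : IsOpen U)
    (hu1 : ∀ x ∈ U, DifferentiableAt ℝ u x)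
    (hu2 : ∀ x ∈ U, DifferentiableAt ℝ (deriv u) x)
    (hu3 : ∀ x ∈ U, DifferentiableAt ℝ (deriv (deriv u)) x) :
    EqOn (deriv (deriv (deriv fun y => u (y / (1 + t * y)))))
      (fun y => deriv (deriv (deriv u)) (y / (1 + t * y)) * (1 + t * y)⁻¹ ^ 6
        - 6 * t * deriv (deriv u) (y / (1 + t * y)) * (1 + t * y)⁻¹ ^ 5
        + 6 * t ^ 2 * deriv u (y / (1 + t * y)) * (1 + t * y)⁻¹ ^ 4)
      ({y | 1 + t * y ≠ 0} ∩ (fun y => y / (1 + t * y)) ⁻¹' U) := by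
  intro y hyS
  rw [(eqOn_deriv_deriv_comp_div_one_add_mul hU hu1 hu2).deriv
    (isOpen_setOf_one_add_mul_ne_zero_inter_preimage hU) hyS]
  have hterm1 := hasDerivAt_comp_div_one_add_mul_mul_pow 4 hyS.1 (hu3 _ hyS.2)
  have hterm2 := (hasDerivAt_comp_div_one_add_mul_mul_pow 3 hyS.1 (hu2 _ hyS.2)).const_mul (2 * t)
  convert (hterm1.fun_sub hterm2).deriv using 2
  · ext z
    ring
  · push_cast
    ring

end Reparametrization

/-- The vector field `v₂ = x² ∂ₓ` generates a symmetry group of equation (6.1). -/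
theorem projective_symmetry_exampleI (a b t : ℝ) (u : ℝ → ℝ)
    (hu1 : ∀ x ∈ Set.Ioo a b, DifferentiableAt ℝ u x)
    (hu2 : ∀ x ∈ Set.Ioo a b, DifferentiableAt ℝ (deriv u) x)
    (hu3 : ∀ x ∈ Set.Ioo a b, DifferentiableAt ℝ (deriv (deriv u)) x)
    (hode : ∀ x ∈ Set.Ioo a b,
      2 * deriv u x * deriv (deriv (deriv u)) x - 3 * (deriv (deriv u) x) ^ 2
        - 2 * u x * (deriv u x) ^ 4 = 0) :
    ∀ x : ℝ, 1 + t * x ≠ 0 → x / (1 + t * x) ∈ Set.Ioo a b →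
      2 * deriv (fun y => u (y / (1 + t * y))) x *
          deriv (deriv (deriv (fun y => u (y / (1 + t * y))))) x
        - 3 * (deriv (deriv (fun y => u (y / (1 + t * y)))) x) ^ 2
        - 2 * (fun y => u (y / (1 + t * y))) x *
            (deriv (fun y => u (y / (1 + t * y))) x) ^ 4 = 0 := by
  intro x hx hxI
  have hxS : x ∈ {y | 1 + t * y ≠ 0} ∩ (fun y => y / (1 + t * y)) ⁻¹' Ioo a b := ⟨hx, hxI⟩
  rw [eqOn_deriv_comp_div_one_add_mul hu1 hxS,
    eqOn_deriv_deriv_comp_div_one_add_mul isOpen_Ioo hu1 hu2 hxS,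
    eqOn_deriv_deriv_deriv_comp_div_one_add_mul isOpen_Ioo hu1 hu2 hu3 hxS]
  linear_combination (1 + t * x)⁻¹ ^ 8 * hode _ hxI
end

section
/- Let I ⊆ ℝ be an open interval and let u : ℝ → ℝ be three times differentiable on I with 2·u′(x)·u‴(x) − 3·u″(x)² − 2·u(x)·u′(x)⁴ = 0 for all x ∈ I. Let Ψ : ℝ → ℝ be twice differentiable with Ψ″(y) = (1/2)·y·Ψ(y) for all y ∈ ℝ. Then the function N(x) := u″(x)·Ψ(u(x)) − 2·u′(x)²·Ψ′(u(x)) is differentiable on I and satisfies 2·u′(x)·N′(x) = 3·u″(x)·N(x) for all x ∈ I. (The key computation behind the first integral I₁ of equation (6.1) in (6.10) of the paper.) -/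
/-- Key computation behind the first integral `I₁` in (6.10). -/
theorem key_computation_I1 (a b : ℝ) (u Ψ : ℝ → ℝ)
    (hu1 : ∀ x ∈ Set.Ioo a b, DifferentiableAt ℝ u x)
    (hu2 : ∀ x ∈ Set.Ioo a b, DifferentiableAt ℝ (deriv u) x)
    (hu3 : ∀ x ∈ Set.Ioo a b, DifferentiableAt ℝ (deriv (deriv u)) x)
    (hode : ∀ x ∈ Set.Ioo a b,
      2 * deriv u x * deriv (deriv (deriv u)) x - 3 * (deriv (deriv u) x) ^ 2
        - 2 * u x * (deriv u x) ^ 4 = 0)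
    (hΨ1 : ∀ y : ℝ, DifferentiableAt ℝ Ψ y)
    (hΨ2 : ∀ y : ℝ, DifferentiableAt ℝ (deriv Ψ) y)
    (hairy : ∀ y : ℝ, deriv (deriv Ψ) y = (1 / 2) * y * Ψ y) :
    (∀ x ∈ Set.Ioo a b, DifferentiableAt ℝ
      (fun x => deriv (deriv u) x * Ψ (u x) - 2 * (deriv u x) ^ 2 * deriv Ψ (u x)) x) ∧
    (∀ x ∈ Set.Ioo a b,
      2 * deriv u x *
        deriv (fun x => deriv (deriv u) x * Ψ (u x) - 2 * (deriv u x) ^ 2 * deriv Ψ (u x)) x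
      = 3 * deriv (deriv u) x *
        (deriv (deriv u) x * Ψ (u x) - 2 * (deriv u x) ^ 2 * deriv Ψ (u x))) := by
  have key : ∀ x ∈ Set.Ioo a b, HasDerivAt
      (fun x => deriv (deriv u) x * Ψ (u x) - 2 * (deriv u x) ^ 2 * deriv Ψ (u x))
      (deriv (deriv (deriv u)) x * Ψ (u x)
        + deriv (deriv u) x * (deriv Ψ (u x) * deriv u x)
        - ((2 * (↑2 * deriv u x ^ 1 * deriv (deriv u) x)) * deriv Ψ (u x)
          + 2 * (deriv u x) ^ 2 * (deriv (deriv Ψ) (u x) * deriv u x))) x := by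
    intro x hx
    have h1 := (hu1 x hx).hasDerivAt
    have h2 := (hu2 x hx).hasDerivAt
    have h3 := (hu3 x hx).hasDerivAt
    have hcomp1 : HasDerivAt (fun x => Ψ (u x)) (deriv Ψ (u x) * deriv u x) x :=
      (hΨ1 (u x)).hasDerivAt.comp x h1
    have hcomp2 : HasDerivAt (fun x => deriv Ψ (u x))
        (deriv (deriv Ψ) (u x) * deriv u x) x :=
      (hΨ2 (u x)).hasDerivAt.comp x h1
    exact ((h3.mul hcomp1)).sub (((h2.pow 2).const_mul 2).mul hcomp2)
  refine ⟨fun x hx => (key x hx).differentiableAt, fun x hx => ?_⟩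
  rw [(key x hx).deriv, hairy (u x)]
  have h := hode x hx
  linear_combination Ψ (u x) * h
end

section
/- Let I ⊆ ℝ be an open interval and let u : ℝ → ℝ be three times differentiable on I with 2·u′(x)·u‴(x) − 3·u″(x)² − 2·u(x)·u′(x)⁴ = 0 for all x ∈ I. Let Ψ : ℝ → ℝ be twice differentiable with Ψ″(y) = (1/2)·y·Ψ(y) for all y ∈ ℝ. Then the function M(x) := (x·u″(x) + 2·u′(x))·Ψ(u(x)) − 2·x·u′(x)²·Ψ′(u(x)) is differentiable on I and satisfies 2·u′(x)·M′(x) = 3·u″(x)·M(x) for all x ∈ I. (The key computation behind the first integral I₂ of equation (6.1) in (6.10) of the paper.) -/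
/-- Key computation behind the first integral `I₂` in (6.10). -/
theorem key_computation_I2 (a b : ℝ) (u Ψ : ℝ → ℝ)
    (hu1 : ∀ x ∈ Set.Ioo a b, DifferentiableAt ℝ u x)
    (hu2 : ∀ x ∈ Set.Ioo a b, DifferentiableAt ℝ (deriv u) x)
    (hu3 : ∀ x ∈ Set.Ioo a b, DifferentiableAt ℝ (deriv (deriv u)) x)
    (hode : ∀ x ∈ Set.Ioo a b,
      2 * deriv u x * deriv (deriv (deriv u)) x - 3 * (deriv (deriv u) x) ^ 2
        - 2 * u x * (deriv u x) ^ 4 = 0)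
    (hΨ1 : ∀ y : ℝ, DifferentiableAt ℝ Ψ y)
    (hΨ2 : ∀ y : ℝ, DifferentiableAt ℝ (deriv Ψ) y)
    (hairy : ∀ y : ℝ, deriv (deriv Ψ) y = (1 / 2) * y * Ψ y) :
    (∀ x ∈ Set.Ioo a b, DifferentiableAt ℝ
      (fun x => (x * deriv (deriv u) x + 2 * deriv u x) * Ψ (u x)
        - 2 * x * (deriv u x) ^ 2 * deriv Ψ (u x)) x) ∧
    (∀ x ∈ Set.Ioo a b,
      2 * deriv u x *
        deriv (fun x => (x * deriv (deriv u) x + 2 * deriv u x) * Ψ (u x)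
          - 2 * x * (deriv u x) ^ 2 * deriv Ψ (u x)) x
      = 3 * deriv (deriv u) x *
        ((x * deriv (deriv u) x + 2 * deriv u x) * Ψ (u x)
          - 2 * x * (deriv u x) ^ 2 * deriv Ψ (u x))) := by
  have key : ∀ x ∈ Set.Ioo a b, HasDerivAt
      (fun x => (x * deriv (deriv u) x + 2 * deriv u x) * Ψ (u x)
        - 2 * x * (deriv u x) ^ 2 * deriv Ψ (u x))
      (((1 * deriv (deriv u) x + x * deriv (deriv (deriv u)) x)
          + 2 * deriv (deriv u) x) * Ψ (u x)
        + (x * deriv (deriv u) x + 2 * deriv u x) * (deriv Ψ (u x) * deriv u x)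
        - (((2 * 1) * (deriv u x) ^ 2
            + (2 * x) * (2 * (deriv u x) ^ 1 * deriv (deriv u) x)) * deriv Ψ (u x)
          + (2 * x * (deriv u x) ^ 2) * (deriv (deriv Ψ) (u x) * deriv u x))) x := by
    intro x hx
    have h1 : HasDerivAt u (deriv u x) x := (hu1 x hx).hasDerivAt
    have h2 : HasDerivAt (deriv u) (deriv (deriv u) x) x := (hu2 x hx).hasDerivAt
    have h3 : HasDerivAt (deriv (deriv u)) (deriv (deriv (deriv u)) x) x :=
      (hu3 x hx).hasDerivAt
    have hP : HasDerivAt (fun x => Ψ (u x)) (deriv Ψ (u x) * deriv u x) x :=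
      ((hΨ1 (u x)).hasDerivAt).comp x h1
    have hP' : HasDerivAt (fun x => deriv Ψ (u x))
        (deriv (deriv Ψ) (u x) * deriv u x) x :=
      ((hΨ2 (u x)).hasDerivAt).comp x h1
    have t1 : HasDerivAt (fun x => x * deriv (deriv u) x + 2 * deriv u x)
        ((1 * deriv (deriv u) x + x * deriv (deriv (deriv u)) x)
          + 2 * deriv (deriv u) x) x :=
      ((hasDerivAt_id x).mul h3).add (h2.const_mul 2)
    have t2 : HasDerivAt (fun x => 2 * x * (deriv u x) ^ 2)
        ((2 * 1) * (deriv u x) ^ 2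
          + (2 * x) * (2 * (deriv u x) ^ 1 * deriv (deriv u) x)) x :=
      (((hasDerivAt_id x).const_mul 2).mul (h2.pow 2))
    exact (t1.mul hP).sub (t2.mul hP')
  refine ⟨fun x hx => (key x hx).differentiableAt, fun x hx => ?_⟩
  rw [(key x hx).deriv, hairy (u x)]
  linear_combination x * Ψ (u x) * hode x hx
end

section
/- Let I ⊆ ℝ be an open interval and let u : ℝ → ℝ be three times differentiable on I with u′(x) ≠ 0 and 2·u′(x)·u‴(x) − 3·u″(x)² − 2·u(x)·u′(x)⁴ = 0 for all x ∈ I. Let Ψ₁, Ψ₂ : ℝ → ℝ be twice differentiable with Ψᵢ″(y) = (1/2)·y·Ψᵢ(y) for all y ∈ ℝ (i = 1,2). If u″(x)·Ψ₂(u(x)) − 2·u′(x)²·Ψ₂′(u(x)) ≠ 0 for all x ∈ I, then the function I₁(x) := (u″(x)·Ψ₁(u(x)) − 2·u′(x)²·Ψ₁′(u(x)))/(u″(x)·Ψ₂(u(x)) − 2·u′(x)²·Ψ₂′(u(x))) has derivative zero at every x ∈ I. Likewise, if (x·u″(x)+2·u′(x))·Ψ₂(u(x)) − 2·x·u′(x)²·Ψ₂′(u(x))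 ≠ 0 for all x ∈ I, then I₂(x) := ((x·u″(x)+2·u′(x))·Ψ₁(u(x)) − 2·x·u′(x)²·Ψ₁′(u(x)))/((x·u″(x)+2·u′(x))·Ψ₂(u(x)) − 2·x·u′(x)²·Ψ₂′(u(x))) has derivative zero at every x ∈ I. (The functions I₁, I₂ of (6.10) are first integrals of equation (6.1) of the paper.) -/
/-!
Write `N_Ψ = u'' Ψ(u) - 2 u'² Ψ'(u)` and `M_Ψ = (x u'' + 2u') Ψ(u) - 2x u'² Ψ'(u) = x N_Ψ + 2u' Ψ(u)`.
For every solution of `Ψ'' = y Ψ / 2`, both satisfy the same linear equation `F' = c F` with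
`c = 3u''/(2u')` along a solution `u` of the ODE, so any quotient of two of them is locally constant.
-/

theorem deriv_div_eq_zero_of_hasDerivAt_mul_self {𝕜 : Type*} [NontriviallyNormedField 𝕜]
    {f g : 𝕜 → 𝕜} {x c : 𝕜} (hf : HasDerivAt f (c * f x) x) (hg : HasDerivAt g (c * g x) x)
    (hgx : g x ≠ 0) : deriv (fun y => f y / g y) x = 0 := by
  change deriv (f / g) x = 0
  rw [(hf.div hg hgx).deriv]
  field_simp
  ring

noncomputable def firstIntegralNumer₁ (u Ψ : ℝ → ℝ) (x : ℝ) : ℝ :=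
  deriv (deriv u) x * Ψ (u x) - 2 * (deriv u x) ^ 2 * deriv Ψ (u x)

noncomputable def firstIntegralNumer₂ (u Ψ : ℝ → ℝ) (x : ℝ) : ℝ :=
  (x * deriv (deriv u) x + 2 * deriv u x) * Ψ (u x) - 2 * x * (deriv u x) ^ 2 * deriv Ψ (u x)

section

variable {u Ψ : ℝ → ℝ} {x : ℝ}

theorem firstIntegralNumer₂_eq :
    firstIntegralNumer₂ u Ψ x = x * firstIntegralNumer₁ u Ψ x + 2 * deriv u x * Ψ (u x) := by
  unfold firstIntegralNumer₁ firstIntegralNumer₂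
  ring

theorem hasDerivAt_deriv_comp_of_airy (hu : DifferentiableAt ℝ u x)
    (hΨ' : DifferentiableAt ℝ (deriv Ψ) (u x))
    (hairy : deriv (deriv Ψ) (u x) = 1 / 2 * u x * Ψ (u x)) :
    HasDerivAt (fun y => deriv Ψ (u y)) (1 / 2 * u x * Ψ (u x) * deriv u x) x := by
  have h := hΨ'.hasDerivAt.comp x hu.hasDerivAt
  rwa [hairy] at h

theorem hasDerivAt_firstIntegralNumer₁ (hu : DifferentiableAt ℝ u x)
    (hu' : DifferentiableAt ℝ (deriv u) x) (hu'' : DifferentiableAt ℝ (deriv (deriv u)) x)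
    (hΨ : DifferentiableAt ℝ Ψ (u x)) (hΨ' : DifferentiableAt ℝ (deriv Ψ) (u x))
    (hairy : deriv (deriv Ψ) (u x) = 1 / 2 * u x * Ψ (u x)) :
    HasDerivAt (firstIntegralNumer₁ u Ψ)
      ((deriv (deriv (deriv u)) x - u x * deriv u x ^ 3) * Ψ (u x)
        - 3 * deriv u x * deriv (deriv u) x * deriv Ψ (u x)) x := by
  have hΨu : HasDerivAt (fun y => Ψ (u y)) (deriv Ψ (u x) * deriv u x) x :=
    hΨ.hasDerivAt.comp x hu.hasDerivAt
  have hΨ'u := hasDerivAt_deriv_comp_of_airy hu hΨ' hairy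
  refine ((hu''.hasDerivAt.mul hΨu).sub
    (((hu'.hasDerivAt.fun_pow 2).const_mul 2).mul hΨ'u)).congr_deriv ?_
  ring

variable (hode : 2 * deriv u x * deriv (deriv (deriv u)) x - 3 * deriv (deriv u) x ^ 2
    - 2 * u x * deriv u x ^ 4 = 0) (hu'_ne : deriv u x ≠ 0)
include hode hu'_ne

theorem hasDerivAt_firstIntegralNumer₁_of_ode (hu : DifferentiableAt ℝ u x)
    (hu' : DifferentiableAt ℝ (deriv u) x) (hu'' : DifferentiableAt ℝ (deriv (deriv u)) x)
    (hΨ : DifferentiableAt ℝ Ψ (u x)) (hΨ' : DifferentiableAt ℝ (deriv Ψ) (u x))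
    (hairy : deriv (deriv Ψ) (u x) = 1 / 2 * u x * Ψ (u x)) :
    HasDerivAt (firstIntegralNumer₁ u Ψ)
      (3 * deriv (deriv u) x / (2 * deriv u x) * firstIntegralNumer₁ u Ψ x) x := by
  refine (hasDerivAt_firstIntegralNumer₁ hu hu' hu'' hΨ hΨ' hairy).congr_deriv ?_
  unfold firstIntegralNumer₁
  field_simp
  linear_combination Ψ (u x) * hode

theorem hasDerivAt_firstIntegralNumer₂_of_ode (hu : DifferentiableAt ℝ u x)
    (hu' : DifferentiableAt ℝ (deriv u) x) (hu'' : DifferentiableAt ℝ (deriv (deriv u)) x)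
    (hΨ : DifferentiableAt ℝ Ψ (u x)) (hΨ' : DifferentiableAt ℝ (deriv Ψ) (u x))
    (hairy : deriv (deriv Ψ) (u x) = 1 / 2 * u x * Ψ (u x)) :
    HasDerivAt (firstIntegralNumer₂ u Ψ)
      (3 * deriv (deriv u) x / (2 * deriv u x) * firstIntegralNumer₂ u Ψ x) x := by
  have hN := hasDerivAt_firstIntegralNumer₁_of_ode hode hu'_ne hu hu' hu'' hΨ hΨ' hairy
  have hΨu : HasDerivAt (fun y => Ψ (u y)) (deriv Ψ (u x) * deriv u x) x :=
    hΨ.hasDerivAt.comp x hu.hasDerivAt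
  have hM := ((hasDerivAt_id' x).mul hN).add ((hu'.hasDerivAt.const_mul 2).mul hΨu)
  have hfun : firstIntegralNumer₂ u Ψ =
      fun y => y * firstIntegralNumer₁ u Ψ y + 2 * deriv u y * Ψ (u y) :=
    funext fun _ => firstIntegralNumer₂_eq
  rw [hfun]
  refine hM.congr_deriv ?_
  unfold firstIntegralNumer₁
  field_simp
  ring

end

/-- The functions `I₁`, `I₂` of (6.10) are first integrals of equation (6.1). -/
theorem first_integrals_exampleI (a b : ℝ) (u Ψ₁ Ψ₂ : ℝ → ℝ)
    (hu1 : ∀ x ∈ Set.Ioo a b, DifferentiableAt ℝ u x)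
    (hu2 : ∀ x ∈ Set.Ioo a b, DifferentiableAt ℝ (deriv u) x)
    (hu3 : ∀ x ∈ Set.Ioo a b, DifferentiableAt ℝ (deriv (deriv u)) x)
    (hu' : ∀ x ∈ Set.Ioo a b, deriv u x ≠ 0)
    (hode : ∀ x ∈ Set.Ioo a b,
      2 * deriv u x * deriv (deriv (deriv u)) x - 3 * (deriv (deriv u) x) ^ 2
        - 2 * u x * (deriv u x) ^ 4 = 0)
    (hΨ₁1 : ∀ y : ℝ, DifferentiableAt ℝ Ψ₁ y)
    (hΨ₁2 : ∀ y : ℝ, DifferentiableAt ℝ (deriv Ψ₁) y)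
    (hairy₁ : ∀ y : ℝ, deriv (deriv Ψ₁) y = (1 / 2) * y * Ψ₁ y)
    (hΨ₂1 : ∀ y : ℝ, DifferentiableAt ℝ Ψ₂ y)
    (hΨ₂2 : ∀ y : ℝ, DifferentiableAt ℝ (deriv Ψ₂) y)
    (hairy₂ : ∀ y : ℝ, deriv (deriv Ψ₂) y = (1 / 2) * y * Ψ₂ y) :
    ((∀ x ∈ Set.Ioo a b,
        deriv (deriv u) x * Ψ₂ (u x) - 2 * (deriv u x) ^ 2 * deriv Ψ₂ (u x) ≠ 0) →
      ∀ x ∈ Set.Ioo a b,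
        deriv (fun x =>
          (deriv (deriv u) x * Ψ₁ (u x) - 2 * (deriv u x) ^ 2 * deriv Ψ₁ (u x)) /
          (deriv (deriv u) x * Ψ₂ (u x) - 2 * (deriv u x) ^ 2 * deriv Ψ₂ (u x))) x = 0) ∧
    ((∀ x ∈ Set.Ioo a b,
        (x * deriv (deriv u) x + 2 * deriv u x) * Ψ₂ (u x)
          - 2 * x * (deriv u x) ^ 2 * deriv Ψ₂ (u x) ≠ 0) →
      ∀ x ∈ Set.Ioo a b,
        deriv (fun x =>
          ((x * deriv (deriv u) x + 2 * deriv u x) * Ψ₁ (u x)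
            - 2 * x * (deriv u x) ^ 2 * deriv Ψ₁ (u x)) /
          ((x * deriv (deriv u) x + 2 * deriv u x) * Ψ₂ (u x)
            - 2 * x * (deriv u x) ^ 2 * deriv Ψ₂ (u x))) x = 0) := by
  refine ⟨fun hne x hx => ?_, fun hne x hx => ?_⟩
  · exact deriv_div_eq_zero_of_hasDerivAt_mul_self
      (hasDerivAt_firstIntegralNumer₁_of_ode (hode x hx) (hu' x hx) (hu1 x hx) (hu2 x hx)
        (hu3 x hx) (hΨ₁1 _) (hΨ₁2 _) (hairy₁ _))
      (hasDerivAt_firstIntegralNumer₁_of_ode (hode x hx) (hu' x hx) (hu1 x hx) (hu2 x hx)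
        (hu3 x hx) (hΨ₂1 _) (hΨ₂2 _) (hairy₂ _)) (hne x hx)
  · exact deriv_div_eq_zero_of_hasDerivAt_mul_self
      (hasDerivAt_firstIntegralNumer₂_of_ode (hode x hx) (hu' x hx) (hu1 x hx) (hu2 x hx)
        (hu3 x hx) (hΨ₁1 _) (hΨ₁2 _) (hairy₁ _))
      (hasDerivAt_firstIntegralNumer₂_of_ode (hode x hx) (hu' x hx) (hu1 x hx) (hu2 x hx)
        (hu3 x hx) (hΨ₂1 _) (hΨ₂2 _) (hairy₂ _)) (hne x hx)
end

section
/- Let I ⊆ ℝ be an open interval and let u : ℝ → ℝ be three times differentiable on I with 2·u′(x)·u‴(x) − 3·u″(x)² − 2·u(x)·u′(x)⁴ = 0 for all x ∈ I. Let Ψ₁, Ψ₂ : ℝ → ℝ be twice differentiable with Ψᵢ″(y) = (1/2)·y·Ψᵢ(y) for all y ∈ ℝ (i = 1,2), and assume Ψ₁(u(x)) ≠ 0 for all x ∈ I. Then the function z(x) := Ψ₂(u(x))/Ψ₁(u(x)) is three times differentiable on I and satisfies 2·z′(x)·z‴(x) = 3·z″(x)² for all x ∈ I. (The point transformation z = Ψ₂(u)/Ψ₁(u)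 maps equation (6.1) into the equation z₃ = 3z₂²/(2z₁), as claimed in Remark 2 of Section 6 of the paper.) -/
/-!
For solutions `Ψ₁, Ψ₂` of `Ψ'' = q Ψ` the Wronskian `c = Ψ₁ Ψ₂' - Ψ₁' Ψ₂` is constant, so
`z = Ψ₂(u)/Ψ₁(u)` has `z' = c u' / Ψ₁(u)²`. Differentiating twice more, with `Ψ₁'' = q Ψ₁`,
gives `2 z' z''' - 3 z''² = (c / Ψ₁(u)²)² (2 u' u''' - 3 u''² - 4 q(u) u'⁴)`,
which for the Airy potential `q y = y / 2` is a multiple of the left side of the ODE for `u`.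
-/

open Set Filter

theorem hasDerivAt_deriv_of_isOpen {𝕜 F : Type*} [NontriviallyNormedField 𝕜]
    [NormedAddCommGroup F] [NormedSpace 𝕜 F] {s : Set 𝕜} (hs : IsOpen s) {f f' f'' : 𝕜 → F}
    (hf : ∀ x ∈ s, HasDerivAt f (f' x) x) (hf' : ∀ x ∈ s, HasDerivAt f' (f'' x) x) :
    ∀ x ∈ s, HasDerivAt (deriv f) (f'' x) x := fun x hx =>
  (hf' x hx).congr_of_eventuallyEq <|
    eventuallyEq_of_mem (hs.mem_nhds hx) fun y hy => (hf y hy).deriv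

theorem exists_wronskian_eq_const {q Ψ₁ Ψ₂ Ψ₁' Ψ₂' : ℝ → ℝ}
    (hΨ₁ : ∀ y, HasDerivAt Ψ₁ (Ψ₁' y) y) (hΨ₁' : ∀ y, HasDerivAt Ψ₁' (q y * Ψ₁ y) y)
    (hΨ₂ : ∀ y, HasDerivAt Ψ₂ (Ψ₂' y) y) (hΨ₂' : ∀ y, HasDerivAt Ψ₂' (q y * Ψ₂ y) y) :
    ∃ c, ∀ y, Ψ₁ y * Ψ₂' y - Ψ₁' y * Ψ₂ y = c := by
  have hW (y : ℝ) : HasDerivAt (fun y => Ψ₁ y * Ψ₂' y - Ψ₁' y * Ψ₂ y) 0 y :=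
    (((hΨ₁ y).fun_mul (hΨ₂' y)).fun_sub ((hΨ₁' y).fun_mul (hΨ₂ y))).congr_deriv (by ring)
  exact ⟨_, fun y =>
    is_const_of_deriv_eq_zero (fun y => (hW y).differentiableAt) (fun y => (hW y).deriv) y 0⟩

noncomputable section RatioDerivatives

variable (c : ℝ) (q Ψ Ψ' u u₁ u₂ u₃ : ℝ → ℝ)

/- Closed forms of `z'`, `z''`, `z'''` for `z = Ψ₂(u)/Ψ₁(u)`: here `Ψ = Ψ₁`, `Ψ'` and `u₁, u₂, u₃`
stand for the derivatives of `Ψ₁` and `u`, `c` is the Wronskian and `Ψ₁'' = q Ψ₁`. -/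

def ratioDeriv₁ (x : ℝ) : ℝ := c * u₁ x / Ψ (u x) ^ 2

def ratioDeriv₂ (x : ℝ) : ℝ :=
  c * (u₂ x * Ψ (u x) - 2 * u₁ x ^ 2 * Ψ' (u x)) / Ψ (u x) ^ 3

def ratioDeriv₃ (x : ℝ) : ℝ :=
  c * ((u₃ x - 2 * q (u x) * u₁ x ^ 3) * Ψ (u x) ^ 2
      - 6 * u₁ x * u₂ x * Ψ (u x) * Ψ' (u x) + 6 * u₁ x ^ 3 * Ψ' (u x) ^ 2) / Ψ (u x) ^ 4

theorem two_mul_ratioDeriv₁_mul_ratioDeriv₃_sub_three_mul_sq {x : ℝ} (hΨ : Ψ (u x) ≠ 0) :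
    2 * ratioDeriv₁ c Ψ u u₁ x * ratioDeriv₃ c q Ψ Ψ' u u₁ u₂ u₃ x
        - 3 * ratioDeriv₂ c Ψ Ψ' u u₁ u₂ x ^ 2
      = (c / Ψ (u x) ^ 2) ^ 2
        * (2 * u₁ x * u₃ x - 3 * u₂ x ^ 2 - 4 * q (u x) * u₁ x ^ 4) := by
  unfold ratioDeriv₁ ratioDeriv₂ ratioDeriv₃
  field_simp
  ring

variable {c q Ψ Ψ' u u₁ u₂ u₃} {x : ℝ}

theorem hasDerivAt_div_comp {Ψ₂ Ψ₂' : ℝ → ℝ} (hu : HasDerivAt u (u₁ x) x)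
    (hΨ : HasDerivAt Ψ (Ψ' (u x)) (u x)) (hΨ₂ : HasDerivAt Ψ₂ (Ψ₂' (u x)) (u x))
    (hW : Ψ (u x) * Ψ₂' (u x) - Ψ' (u x) * Ψ₂ (u x) = c) (hne : Ψ (u x) ≠ 0) :
    HasDerivAt (fun x => Ψ₂ (u x) / Ψ (u x)) (ratioDeriv₁ c Ψ u u₁ x) x := by
  refine ((hΨ₂.comp x hu).fun_div (hΨ.comp x hu) hne).congr_deriv ?_
  rw [ratioDeriv₁, ← hW]
  simp only [Function.comp_apply]
  field_simp

theorem hasDerivAt_ratioDeriv₁ (hu : HasDerivAt u (u₁ x) x) (hu₁ : HasDerivAt u₁ (u₂ x) x)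
    (hΨ : HasDerivAt Ψ (Ψ' (u x)) (u x)) (hne : Ψ (u x) ≠ 0) :
    HasDerivAt (ratioDeriv₁ c Ψ u u₁) (ratioDeriv₂ c Ψ Ψ' u u₁ u₂ x) x := by
  refine ((hu₁.const_mul c).fun_div ((hΨ.comp x hu).fun_pow 2)
    (pow_ne_zero 2 hne)).congr_deriv ?_
  rw [ratioDeriv₂]
  simp only [Function.comp_apply]
  field_simp
  ring

theorem hasDerivAt_ratioDeriv₂ (hu : HasDerivAt u (u₁ x) x) (hu₁ : HasDerivAt u₁ (u₂ x) x)
    (hu₂ : HasDerivAt u₂ (u₃ x) x) (hΨ : HasDerivAt Ψ (Ψ' (u x)) (u x))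
    (hΨ' : HasDerivAt Ψ' (q (u x) * Ψ (u x)) (u x)) (hne : Ψ (u x) ≠ 0) :
    HasDerivAt (ratioDeriv₂ c Ψ Ψ' u u₁ u₂) (ratioDeriv₃ c q Ψ Ψ' u u₁ u₂ u₃ x) x := by
  have hnum := ((hu₂.fun_mul (hΨ.comp x hu)).fun_sub
    (((hu₁.fun_pow 2).const_mul 2).fun_mul (hΨ'.comp x hu))).const_mul c
  refine (hnum.fun_div ((hΨ.comp x hu).fun_pow 3) (pow_ne_zero 3 hne)).congr_deriv ?_
  rw [ratioDeriv₃]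
  simp only [Function.comp_apply, Nat.cast_ofNat]
  field_simp
  ring

end RatioDerivatives

/-- The point transformation `z = Ψ₂(u)/Ψ₁(u)` maps (6.1) into `z₃ = 3 z₂²/(2 z₁)`. -/
theorem point_transformation_exampleI (a b : ℝ) (u Ψ₁ Ψ₂ : ℝ → ℝ)
    (hu1 : ∀ x ∈ Set.Ioo a b, DifferentiableAt ℝ u x)
    (hu2 : ∀ x ∈ Set.Ioo a b, DifferentiableAt ℝ (deriv u) x)
    (hu3 : ∀ x ∈ Set.Ioo a b, DifferentiableAt ℝ (deriv (deriv u)) x)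
    (hode : ∀ x ∈ Set.Ioo a b,
      2 * deriv u x * deriv (deriv (deriv u)) x - 3 * (deriv (deriv u) x) ^ 2
        - 2 * u x * (deriv u x) ^ 4 = 0)
    (hΨ₁1 : ∀ y : ℝ, DifferentiableAt ℝ Ψ₁ y)
    (hΨ₁2 : ∀ y : ℝ, DifferentiableAt ℝ (deriv Ψ₁) y)
    (hairy₁ : ∀ y : ℝ, deriv (deriv Ψ₁) y = (1 / 2) * y * Ψ₁ y)
    (hΨ₂1 : ∀ y : ℝ, DifferentiableAt ℝ Ψ₂ y)
    (hΨ₂2 : ∀ y : ℝ, DifferentiableAt ℝ (deriv Ψ₂) y)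
    (hairy₂ : ∀ y : ℝ, deriv (deriv Ψ₂) y = (1 / 2) * y * Ψ₂ y)
    (hne : ∀ x ∈ Set.Ioo a b, Ψ₁ (u x) ≠ 0) :
    (∀ x ∈ Set.Ioo a b,
      DifferentiableAt ℝ (fun x => Ψ₂ (u x) / Ψ₁ (u x)) x) ∧
    (∀ x ∈ Set.Ioo a b,
      DifferentiableAt ℝ (deriv (fun x => Ψ₂ (u x) / Ψ₁ (u x))) x) ∧
    (∀ x ∈ Set.Ioo a b,
      DifferentiableAt ℝ (deriv (deriv (fun x => Ψ₂ (u x) / Ψ₁ (u x)))) x) ∧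
    (∀ x ∈ Set.Ioo a b,
      2 * deriv (fun x => Ψ₂ (u x) / Ψ₁ (u x)) x *
          deriv (deriv (deriv (fun x => Ψ₂ (u x) / Ψ₁ (u x)))) x
        = 3 * (deriv (deriv (fun x => Ψ₂ (u x) / Ψ₁ (u x))) x) ^ 2) := by
  set q : ℝ → ℝ := fun y => 1 / 2 * y
  have hΨ₁ : ∀ y, HasDerivAt Ψ₁ (deriv Ψ₁ y) y := fun y => (hΨ₁1 y).hasDerivAt
  have hΨ₂ : ∀ y, HasDerivAt Ψ₂ (deriv Ψ₂ y) y := fun y => (hΨ₂1 y).hasDerivAt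
  have hΨ₁' : ∀ y, HasDerivAt (deriv Ψ₁) (q y * Ψ₁ y) y := fun y =>
    hairy₁ y ▸ (hΨ₁2 y).hasDerivAt
  have hΨ₂' : ∀ y, HasDerivAt (deriv Ψ₂) (q y * Ψ₂ y) y := fun y =>
    hairy₂ y ▸ (hΨ₂2 y).hasDerivAt
  obtain ⟨c, hW⟩ := exists_wronskian_eq_const hΨ₁ hΨ₁' hΨ₂ hΨ₂'
  have hz₁ : ∀ x ∈ Ioo a b, HasDerivAt (fun x => Ψ₂ (u x) / Ψ₁ (u x))
      (ratioDeriv₁ c Ψ₁ u (deriv u) x) x := fun x hx =>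
    hasDerivAt_div_comp (hu1 x hx).hasDerivAt (hΨ₁ _) (hΨ₂ _) (hW _) (hne x hx)
  have hz₂ := hasDerivAt_deriv_of_isOpen isOpen_Ioo hz₁ fun x hx =>
    hasDerivAt_ratioDeriv₁ (hu1 x hx).hasDerivAt (hu2 x hx).hasDerivAt (hΨ₁ _) (hne x hx)
  have hz₃ := hasDerivAt_deriv_of_isOpen isOpen_Ioo hz₂ fun x hx =>
    hasDerivAt_ratioDeriv₂ (q := q) (hu1 x hx).hasDerivAt (hu2 x hx).hasDerivAt
      (hu3 x hx).hasDerivAt (hΨ₁ _) (hΨ₁' _) (hne x hx)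
  refine ⟨fun x hx => (hz₁ x hx).differentiableAt, fun x hx => (hz₂ x hx).differentiableAt,
    fun x hx => (hz₃ x hx).differentiableAt, fun x hx => ?_⟩
  rw [(hz₁ x hx).deriv, (hz₂ x hx).deriv, (hz₃ x hx).deriv]
  linear_combination two_mul_ratioDeriv₁_mul_ratioDeriv₃_sub_three_mul_sq c q Ψ₁ (deriv Ψ₁) u
      (deriv u) (deriv (deriv u)) (deriv (deriv (deriv u))) (hne x hx)
    + (c / Ψ₁ (u x) ^ 2) ^ 2 * hode x hx
end

section
/- Let I ⊆ ℝ be an open interval with 0 ∉ I, let u : ℝ → ℝ be twice differentiable on I with u′(x) ≠ 0 for all x ∈ I, let Ψ₁, Ψ₂ : ℝ → ℝ be twice differentiable with Ψᵢ″(y) = (1/2)·y·Ψᵢ(y) for all y ∈ ℝ (i = 1,2), and let c₁, c₂ ∈ ℝ. Assume that for all x ∈ I: (i) u″(x)·(Ψ₁(u(x)) − c₁·Ψ₂(u(x))) = 2·u′(x)²·(Ψ₁′(u(x)) − c₁·Ψ₂′(u(x))); (ii) (x·u″(x) + 2·u′(x))·(Ψ₁(u(x)) − c₂·Ψ₂(u(x)))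 = 2·x·u′(x)²·(Ψ₁′(u(x)) − c₂·Ψ₂′(u(x))); and (iii) Ψ₁(u(x)) − c₂·Ψ₂(u(x)) ≠ 0. Then the function Φ(x) := x·(Ψ₁(u(x)) − c₁·Ψ₂(u(x)))/(Ψ₁(u(x)) − c₂·Ψ₂(u(x))) has derivative zero at every x ∈ I. (This is the content of the third first integral Θ₃ in (6.11) and of the general solution formula (6.13) of the paper: on the level sets I₁ = c₁, I₂ = c₂, the quantity x(Ψ₁(u)−c₁Ψ₂(u))/(Ψ₁(u)−c₂Ψ₂(u)) is constant.) -/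
/-!
Write `A = Ψ₁(u) − c₁Ψ₂(u)`, `D = Ψ₁(u) − c₂Ψ₂(u)` and `α = Ψ₁′(u) − c₁Ψ₂′(u)`,
`δ = Ψ₁′(u) − c₂Ψ₂′(u)`. Then (i) reads `u″A = 2u′²α` and (ii) reads `(xu″ + 2u′)D = 2xu′²δ`;
eliminating `u″` leaves `u′ (AD + xu′(αD − Aδ)) = 0`, and the bracket is the numerator of
`(xA/D)′`.
-/

lemma hasDerivAt_comp_sub_const_mul_comp {f g u : ℝ → ℝ} {x : ℝ} (c : ℝ)
    (hf : DifferentiableAt ℝ f (u x)) (hg : DifferentiableAt ℝ g (u x))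
    (hu : DifferentiableAt ℝ u x) :
    HasDerivAt (fun x => f (u x) - c * g (u x))
      ((deriv f (u x) - c * deriv g (u x)) * deriv u x) x := by
  have := (hf.hasDerivAt.comp x hu.hasDerivAt).sub
    ((hg.hasDerivAt.comp x hu.hasDerivAt).const_mul c)
  exact this.congr_deriv (by ring)

lemma deriv_id_mul_div_eq_zero {A D : ℝ → ℝ} {A' D' x : ℝ}
    (hA : HasDerivAt A A' x) (hD : HasDerivAt D D' x) (hDx : D x ≠ 0)
    (h : A x * D x + x * (A' * D x - A x * D') = 0) :
    deriv (fun x => x * A x / D x) x = 0 := by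
  have hQ : HasDerivAt (fun x => x * A x / D x)
      (((1 * A x + x * A') * D x - x * A x * D') / D x ^ 2) x :=
    ((hasDerivAt_id' x).mul hA).div hD hDx
  rw [hQ.deriv, div_eq_zero_iff]
  left
  linear_combination h

/-- Here `p = u′(x)` and `q = u″(x)`. -/
lemma theta3_numerator_eq_zero {x p q A D α δ : ℝ} (hp : p ≠ 0)
    (hi : q * A = 2 * p ^ 2 * α) (hii : (x * q + 2 * p) * D = 2 * x * p ^ 2 * δ) :
    A * D + x * (α * p * D - A * (δ * p)) = 0 := by
  have key : p * (A * D + x * (α * p * D - A * (δ * p))) = 0 := by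
    linear_combination -(x * D / 2) * hi + (A / 2) * hii
  exact (mul_eq_zero.mp key).resolve_left hp

theorem theta3_first_integral_exampleI_general (a b c₁ c₂ : ℝ) (u Ψ₁ Ψ₂ : ℝ → ℝ)
    (hu1 : ∀ x ∈ Set.Ioo a b, DifferentiableAt ℝ u x)
    (hu' : ∀ x ∈ Set.Ioo a b, deriv u x ≠ 0)
    (hΨ₁1 : ∀ y : ℝ, DifferentiableAt ℝ Ψ₁ y)
    (hΨ₂1 : ∀ y : ℝ, DifferentiableAt ℝ Ψ₂ y)
    (hi : ∀ x ∈ Set.Ioo a b,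
      deriv (deriv u) x * (Ψ₁ (u x) - c₁ * Ψ₂ (u x))
        = 2 * (deriv u x) ^ 2 * (deriv Ψ₁ (u x) - c₁ * deriv Ψ₂ (u x)))
    (hii : ∀ x ∈ Set.Ioo a b,
      (x * deriv (deriv u) x + 2 * deriv u x) * (Ψ₁ (u x) - c₂ * Ψ₂ (u x))
        = 2 * x * (deriv u x) ^ 2 * (deriv Ψ₁ (u x) - c₂ * deriv Ψ₂ (u x)))
    (hiii : ∀ x ∈ Set.Ioo a b, Ψ₁ (u x) - c₂ * Ψ₂ (u x) ≠ 0) :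
    ∀ x ∈ Set.Ioo a b,
      deriv (fun x =>
        x * (Ψ₁ (u x) - c₁ * Ψ₂ (u x)) / (Ψ₁ (u x) - c₂ * Ψ₂ (u x))) x = 0 := by
  intro x hx
  exact deriv_id_mul_div_eq_zero
    (hasDerivAt_comp_sub_const_mul_comp c₁ (hΨ₁1 _) (hΨ₂1 _) (hu1 x hx))
    (hasDerivAt_comp_sub_const_mul_comp c₂ (hΨ₁1 _) (hΨ₂1 _) (hu1 x hx))
    (hiii x hx) (theta3_numerator_eq_zero (hu' x hx) (hi x hx) (hii x hx))

/-- The quantity `x(Ψ₁(u)−c₁Ψ₂(u))/(Ψ₁(u)−c₂Ψ₂(u))` is constant on the level sets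
`I₁ = c₁`, `I₂ = c₂` (the third first integral `Θ₃` of (6.11) and formula (6.13)). -/
theorem theta3_first_integral_exampleI (a b c₁ c₂ : ℝ) (u Ψ₁ Ψ₂ : ℝ → ℝ)
    (h0 : (0 : ℝ) ∉ Set.Ioo a b)
    (hu1 : ∀ x ∈ Set.Ioo a b, DifferentiableAt ℝ u x)
    (hu2 : ∀ x ∈ Set.Ioo a b, DifferentiableAt ℝ (deriv u) x)
    (hu' : ∀ x ∈ Set.Ioo a b, deriv u x ≠ 0)
    (hΨ₁1 : ∀ y : ℝ, DifferentiableAt ℝ Ψ₁ y)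
    (hΨ₁2 : ∀ y : ℝ, DifferentiableAt ℝ (deriv Ψ₁) y)
    (hairy₁ : ∀ y : ℝ, deriv (deriv Ψ₁) y = (1 / 2) * y * Ψ₁ y)
    (hΨ₂1 : ∀ y : ℝ, DifferentiableAt ℝ Ψ₂ y)
    (hΨ₂2 : ∀ y : ℝ, DifferentiableAt ℝ (deriv Ψ₂) y)
    (hairy₂ : ∀ y : ℝ, deriv (deriv Ψ₂) y = (1 / 2) * y * Ψ₂ y)
    (hi : ∀ x ∈ Set.Ioo a b,
      deriv (deriv u) x * (Ψ₁ (u x) - c₁ * Ψ₂ (u x))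
        = 2 * (deriv u x) ^ 2 * (deriv Ψ₁ (u x) - c₁ * deriv Ψ₂ (u x)))
    (hii : ∀ x ∈ Set.Ioo a b,
      (x * deriv (deriv u) x + 2 * deriv u x) * (Ψ₁ (u x) - c₂ * Ψ₂ (u x))
        = 2 * x * (deriv u x) ^ 2 * (deriv Ψ₁ (u x) - c₂ * deriv Ψ₂ (u x)))
    (hiii : ∀ x ∈ Set.Ioo a b, Ψ₁ (u x) - c₂ * Ψ₂ (u x) ≠ 0) :
    ∀ x ∈ Set.Ioo a b,
      deriv (fun x =>
        x * (Ψ₁ (u x) - c₁ * Ψ₂ (u x)) / (Ψ₁ (u x) - c₂ * Ψ₂ (u x))) x = 0 :=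
  theta3_first_integral_exampleI_general a b c₁ c₂ u Ψ₁ Ψ₂ hu1 hu' hΨ₁1 hΨ₂1 hi hii hiii
end

section
/- Let I ⊆ ℝ be an open interval and let u : ℝ → ℝ be three times differentiable on I with u(x) ≠ 0, u′(x) ≠ 0, u′(x)² − 2·u(x)·u″(x) ≠ 0, and u‴(x)·(u′(x)² − 2·u(x)·u″(x))·u(x)² + 1 = 0 for all x ∈ I. Define m(x) := 1/u′(x) and y(x) := (1/2)·u′(x)² − u(x)·u″(x). Then m and y are differentiable on I and m′(x) = y′(x)·(2·y(x)²·m(x)² − y(x)) for all x ∈ I. (The reduction of equation (7.1) to the Riccati equation m₁ = 2y²m² − y of (7.12), pulled back along a solution via y = u₁²/2 − uu₂, m = 1/u₁, as in Remark after (7.11) of the paper.) -/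
/-!
Along a solution, `y = u'²/2 - u u''` has `y' = -u u'''`, and the equation reads
`u''' (2y) u² = -1`. Since `2y - u'² = -2u u''`,
`y' (2y²m² - y) = -u u''' y (2y - u'²)/u'² = u''' (2y) u² · u''/u'² = -u''/u'²`,
which is `m'` for `m = 1/u'`.
-/

section

variable {𝕜 : Type*} [NontriviallyNormedField 𝕜] {u : 𝕜 → 𝕜} {x : 𝕜}

theorem hasDerivAt_one_div_deriv (hu2 : DifferentiableAt 𝕜 (deriv u) x) (hu' : deriv u x ≠ 0) :
    HasDerivAt (fun x => 1 / deriv u x) (-deriv (deriv u) x / deriv u x ^ 2) x := by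
  simpa only [one_div] using hu2.hasDerivAt.fun_inv hu'

theorem hasDerivAt_half_sq_deriv_sub_mul_deriv_deriv [NeZero (2 : 𝕜)]
    (hu1 : DifferentiableAt 𝕜 u x) (hu2 : DifferentiableAt 𝕜 (deriv u) x)
    (hu3 : DifferentiableAt 𝕜 (deriv (deriv u)) x) :
    HasDerivAt (fun x => (1 / 2) * deriv u x ^ 2 - u x * deriv (deriv u) x)
      (-(u x * deriv (deriv (deriv u)) x)) x := by
  refine (((hu2.hasDerivAt.fun_pow 2).const_mul (1 / 2 : 𝕜)).fun_sub
    (hu1.hasDerivAt.fun_mul hu3.hasDerivAt)).congr_deriv ?_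
  field_simp
  ring

end

theorem riccati_identity_of_ode {K : Type*} [Field K] [NeZero (2 : K)] {u₀ u₁ u₂ u₃ : K}
    (hu₁ : u₁ ≠ 0) (hode : u₃ * (u₁ ^ 2 - 2 * u₀ * u₂) * u₀ ^ 2 + 1 = 0) :
    -u₂ / u₁ ^ 2 = -(u₀ * u₃) *
      (2 * ((1 / 2) * u₁ ^ 2 - u₀ * u₂) ^ 2 * (1 / u₁) ^ 2 - ((1 / 2) * u₁ ^ 2 - u₀ * u₂)) := by
  field_simp
  linear_combination -2 * u₂ * hode

theorem riccati_reduction_exampleII_general (a b : ℝ) (u : ℝ → ℝ)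
    (hu1 : ∀ x ∈ Set.Ioo a b, DifferentiableAt ℝ u x)
    (hu2 : ∀ x ∈ Set.Ioo a b, DifferentiableAt ℝ (deriv u) x)
    (hu3 : ∀ x ∈ Set.Ioo a b, DifferentiableAt ℝ (deriv (deriv u)) x)
    (hu' : ∀ x ∈ Set.Ioo a b, deriv u x ≠ 0)
    (hode : ∀ x ∈ Set.Ioo a b,
      deriv (deriv (deriv u)) x * ((deriv u x) ^ 2 - 2 * u x * deriv (deriv u) x)
        * (u x) ^ 2 + 1 = 0) :
    (∀ x ∈ Set.Ioo a b, DifferentiableAt ℝ (fun x => 1 / deriv u x) x) ∧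
    (∀ x ∈ Set.Ioo a b, DifferentiableAt ℝ
      (fun x => (1 / 2) * (deriv u x) ^ 2 - u x * deriv (deriv u) x) x) ∧
    (∀ x ∈ Set.Ioo a b,
      deriv (fun x => 1 / deriv u x) x
        = deriv (fun x => (1 / 2) * (deriv u x) ^ 2 - u x * deriv (deriv u) x) x *
          (2 * ((1 / 2) * (deriv u x) ^ 2 - u x * deriv (deriv u) x) ^ 2 *
              (1 / deriv u x) ^ 2
            - ((1 / 2) * (deriv u x) ^ 2 - u x * deriv (deriv u) x))) := by
  have hm := fun x hx => hasDerivAt_one_div_deriv (hu2 x hx) (hu' x hx)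
  have hy := fun x hx =>
    hasDerivAt_half_sq_deriv_sub_mul_deriv_deriv (hu1 x hx) (hu2 x hx) (hu3 x hx)
  refine ⟨fun x hx => (hm x hx).differentiableAt, fun x hx => (hy x hx).differentiableAt,
    fun x hx => ?_⟩
  rw [(hm x hx).deriv, (hy x hx).deriv]
  exact riccati_identity_of_ode (hu' x hx) (hode x hx)

/-- Reduction of equation (7.1) to the Riccati equation (7.12),
pulled back along a solution via `y = u₁²/2 − u u₂`, `m = 1/u₁`. -/
theorem riccati_reduction_exampleII (a b : ℝ) (u : ℝ → ℝ)
    (hu1 : ∀ x ∈ Set.Ioo a b, DifferentiableAt ℝ u x)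
    (hu2 : ∀ x ∈ Set.Ioo a b, DifferentiableAt ℝ (deriv u) x)
    (hu3 : ∀ x ∈ Set.Ioo a b, DifferentiableAt ℝ (deriv (deriv u)) x)
    (hu0 : ∀ x ∈ Set.Ioo a b, u x ≠ 0)
    (hu' : ∀ x ∈ Set.Ioo a b, deriv u x ≠ 0)
    (hy0 : ∀ x ∈ Set.Ioo a b, (deriv u x) ^ 2 - 2 * u x * deriv (deriv u) x ≠ 0)
    (hode : ∀ x ∈ Set.Ioo a b,
      deriv (deriv (deriv u)) x * ((deriv u x) ^ 2 - 2 * u x * deriv (deriv u) x)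
        * (u x) ^ 2 + 1 = 0) :
    (∀ x ∈ Set.Ioo a b, DifferentiableAt ℝ (fun x => 1 / deriv u x) x) ∧
    (∀ x ∈ Set.Ioo a b, DifferentiableAt ℝ
      (fun x => (1 / 2) * (deriv u x) ^ 2 - u x * deriv (deriv u) x) x) ∧
    (∀ x ∈ Set.Ioo a b,
      deriv (fun x => 1 / deriv u x) x
        = deriv (fun x => (1 / 2) * (deriv u x) ^ 2 - u x * deriv (deriv u) x) x *
          (2 * ((1 / 2) * (deriv u x) ^ 2 - u x * deriv (deriv u) x) ^ 2 *
              (1 / deriv u x) ^ 2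
            - ((1 / 2) * (deriv u x) ^ 2 - u x * deriv (deriv u) x))) :=
  riccati_reduction_exampleII_general a b u hu1 hu2 hu3 hu' hode
end
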